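/- arXiv:2601.07067 — 4 statements merged into one kernel-verified Lean document; each statement's English description precedes it below -/
import Mathlib

section
/- Let q ≡ 7 (mod 8), r ≡ 3 (mod 8), s ≡ 3 (mod 8) be distinct primes with (q/r) = (q/s) = -1 and (s/r) = 1. Then there do not exist integers a, b₁, b₂ with a + 1 = 2q·b₁² and a - 1 = r·s·b₂². -/
/-! Modulo `r`, `a + 1 ≡ 2` is a non-residue because `r ≡ 3 (mod 8)`, whereas `2q·b₁²` is a
residue or zero because `(2q/r) = (2/r)(q/r) = 1`. -/

namespace legendreSym

variable {p : ℕ} [Fact p.Prime]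

theorem at_two_of_mod_eight_eq_three (hp : p % 8 = 3) : legendreSym p 2 = -1 := by
  rw [at_two (by omega), ZMod.χ₈_nat_mod_eight, hp]
  rfl

theorem add_mul_left (a k : ℤ) : legendreSym p (a + p * k) = legendreSym p a := by
  rw [legendreSym.mod, Int.add_mul_emod_self_left, ← legendreSym.mod]

theorem mul_sq_ne_neg_one {c : ℤ} (hc : legendreSym p c = 1) (b : ℤ) :
    legendreSym p (c * b ^ 2) ≠ -1 := by
  rw [sq, legendreSym.mul, legendreSym.mul, hc, one_mul]
  nlinarith [mul_self_nonneg (legendreSym p b)]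

end legendreSym

theorem stmt0_general (q r s : ℕ) (hr : r.Prime)
    (hr8 : r % 8 = 3)
    (h1 : @legendreSym r ⟨hr⟩ (q : ℤ) = -1) :
    ¬ ∃ a b₁ b₂ : ℤ, a + 1 = 2 * q * b₁ ^ 2 ∧ a - 1 = r * s * b₂ ^ 2 := by
  have : Fact r.Prime := ⟨hr⟩
  rintro ⟨a, b₁, b₂, hplus, hminus⟩
  have h2 := legendreSym.at_two_of_mod_eight_eq_three hr8
  have h2q : legendreSym r (2 * q) = 1 := by
    rw [legendreSym.mul, h2, h1]
    norm_num
  have hnonres : legendreSym r (a + 1) = -1 := by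
    rw [show a + 1 = 2 + r * (s * b₂ ^ 2) by linear_combination hminus,
      legendreSym.add_mul_left, h2]
  exact legendreSym.mul_sq_ne_neg_one h2q b₁ (hplus ▸ hnonres)

/-- Let q ≡ 7 (mod 8), r ≡ 3 (mod 8), s ≡ 3 (mod 8) be distinct primes with
(q/r) = (q/s) = -1 and (s/r) = 1. Then there do not exist integers a, b₁, b₂ with
a + 1 = 2q·b₁² and a - 1 = r·s·b₂². -/
theorem stmt0 (q r s : ℕ) (hq : q.Prime) (hr : r.Prime) (hs : s.Prime)
    (hqr : q ≠ r) (hqs : q ≠ s) (hrs : r ≠ s)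
    (hq8 : q % 8 = 7) (hr8 : r % 8 = 3) (hs8 : s % 8 = 3)
    (h1 : @legendreSym r ⟨hr⟩ (q : ℤ) = -1) (h2 : @legendreSym s ⟨hs⟩ (q : ℤ) = -1)
    (h3 : @legendreSym r ⟨hr⟩ (s : ℤ) = 1) :
    ¬ ∃ a b₁ b₂ : ℤ, a + 1 = 2 * q * b₁ ^ 2 ∧ a - 1 = r * s * b₂ ^ 2 :=
  stmt0_general q r s hr hr8 h1
end

section
/- Let q ≡ 7 (mod 8), and r ≡ 3 (mod 8), s ≡ 3 (mod 8) be primes with (q/r) = (q/s) = -1. Then there are no integers a, b₁, b₂ with b₁ coprime to r and b₂ coprime to q such that a + 1 = b₁² and a - 1 = 2qrs·b₂². -/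
theorem Int.sq_ne_natCast_mul_add_two {p : ℕ} [Fact p.Prime] (hp : p % 8 = 3 ∨ p % 8 = 5)
    (b k : ℤ) : b ^ 2 ≠ p * k + 2 := by
  intro h
  have hsq : IsSquare (2 : ZMod p) :=
    ⟨b, by simpa [sq] using (congrArg (Int.cast : ℤ → ZMod p) h).symm⟩
  rw [ZMod.exists_sq_eq_two_iff (by omega)] at hsq
  omega

theorem stmt2_general (q r s : ℕ) (hr : r.Prime)
    (hr8 : r % 8 = 3) :
    ¬ ∃ a b₁ b₂ : ℤ, IsCoprime b₁ (r : ℤ) ∧ IsCoprime b₂ (q : ℤ) ∧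
      a + 1 = b₁ ^ 2 ∧ a - 1 = 2 * q * r * s * b₂ ^ 2 := by
  rintro ⟨a, b₁, b₂, -, -, hb₁, hb₂⟩
  have : Fact r.Prime := ⟨hr⟩
  exact Int.sq_ne_natCast_mul_add_two (Or.inl hr8) b₁ (2 * q * s * b₂ ^ 2)
    (by linear_combination -hb₁ + hb₂)

/-- Let q ≡ 7 (mod 8), and r ≡ 3 (mod 8), s ≡ 3 (mod 8) be primes with
(q/r) = (q/s) = -1. Then there are no integers a, b₁, b₂ with b₁ coprime to r and b₂
coprime to q such that a + 1 = b₁² and a - 1 = 2qrs·b₂². -/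
theorem stmt2 (q r s : ℕ) (hq : q.Prime) (hr : r.Prime) (hs : s.Prime)
    (hq8 : q % 8 = 7) (hr8 : r % 8 = 3) (hs8 : s % 8 = 3)
    (h1 : @legendreSym r ⟨hr⟩ (q : ℤ) = -1) (h2 : @legendreSym s ⟨hs⟩ (q : ℤ) = -1) :
    ¬ ∃ a b₁ b₂ : ℤ, IsCoprime b₁ (r : ℤ) ∧ IsCoprime b₂ (q : ℤ) ∧
      a + 1 = b₁ ^ 2 ∧ a - 1 = 2 * q * r * s * b₂ ^ 2 :=
  stmt2_general q r s hr hr8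
end

section
/- Let q ≡ 7 (mod 8) and r ≡ 3 (mod 8), s ≡ 3 (mod 8) be distinct primes with (q/r) = (q/s) = -1. If a, b are positive integers satisfying a² - 1 = 2qrs·b², then there do not exist integers b₁, b₂ with a - 1 = r·b₁² and a + 1 = 2qs·b₂². -/
/-! From `a + 1 = 2qs·b₂²` we get `r·b₁² = a - 1 ≡ -2 (mod q)`, so `(r/q) = (-2/q)`. Since
`q ≡ 7 (mod 8)`, `(-2/q) = -1`; but `r ≡ q ≡ 3 (mod 4)` and `(q/r) = -1` give `(r/q) = 1` by
quadratic reciprocity. -/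

namespace legendreSym

variable (p : ℕ) [Fact p.Prime]

theorem eq_of_mul_sq_modEq {c d y : ℤ} (h : c * y ^ 2 ≡ d [ZMOD p]) (hd : ¬(p : ℤ) ∣ d) :
    legendreSym p c = legendreSym p d := by
  have hd0 : legendreSym p d ≠ 0 := by
    rwa [Ne, eq_zero_iff, ZMod.intCast_zmod_eq_zero_iff_dvd]
  have hcy : legendreSym p d = legendreSym p c * legendreSym p (y ^ 2) := by
    rw [legendreSym.mod, ← h, ← legendreSym.mod, legendreSym.mul]
  have hy : (y : ZMod p) ≠ 0 := fun hy0 =>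
    hd0 (by rw [hcy, (eq_zero_iff p (y ^ 2)).mpr (by push_cast; simp [hy0]), mul_zero])
  rw [hcy, sq_one' p hy, mul_one]

theorem neg_two_of_mod_eight_eq_seven (hp : p % 8 = 7) : legendreSym p (-2) = -1 := by
  rw [at_neg_two (by omega), ZMod.χ₈'_nat_eq_if_mod_eight]
  rw [if_neg (by omega), if_neg (by omega)]

end legendreSym

theorem stmt3_general (q r s : ℕ) (hq : q.Prime) (hr : r.Prime)
    (hq8 : q % 8 = 7) (hr8 : r % 8 = 3)
    (h1 : @legendreSym r ⟨hr⟩ (q : ℤ) = -1)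
    (a : ℤ) :
    ¬ ∃ b₁ b₂ : ℤ, a - 1 = r * b₁ ^ 2 ∧ a + 1 = 2 * q * s * b₂ ^ 2 := by
  have : Fact q.Prime := ⟨hq⟩
  have : Fact r.Prime := ⟨hr⟩
  rintro ⟨b₁, b₂, hb₁, hb₂⟩
  have hmod : (r : ℤ) * b₁ ^ 2 ≡ -2 [ZMOD q] :=
    Int.modEq_iff_dvd.mpr ⟨-(2 * s * b₂ ^ 2), by linear_combination hb₁ - hb₂⟩
  have hq_two : ¬(q : ℤ) ∣ -2 := fun h => by
    have := Int.le_of_dvd (by norm_num) (dvd_neg.mp h)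
    omega
  have hrq : legendreSym q r = 1 := by
    rw [legendreSym.quadratic_reciprocity_three_mod_four (by omega) (by omega), h1, neg_neg]
  have hsym := legendreSym.eq_of_mul_sq_modEq q hmod hq_two
  rw [hrq, legendreSym.neg_two_of_mod_eight_eq_seven q hq8] at hsym
  exact absurd hsym (by norm_num)

/-- Let q ≡ 7 (mod 8) and r ≡ 3 (mod 8), s ≡ 3 (mod 8) be distinct primes with
(q/r) = (q/s) = -1. If a, b are positive integers satisfying a² - 1 = 2qrs·b², then there do
not exist integers b₁, b₂ with a - 1 = r·b₁² and a + 1 = 2qs·b₂². -/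
theorem stmt3 (q r s : ℕ) (hq : q.Prime) (hr : r.Prime) (hs : s.Prime)
    (hqr : q ≠ r) (hqs : q ≠ s) (hrs : r ≠ s)
    (hq8 : q % 8 = 7) (hr8 : r % 8 = 3) (hs8 : s % 8 = 3)
    (h1 : @legendreSym r ⟨hr⟩ (q : ℤ) = -1) (h2 : @legendreSym s ⟨hs⟩ (q : ℤ) = -1)
    (a b : ℤ) (ha : 0 < a) (hb : 0 < b) (hab : a ^ 2 - 1 = 2 * q * r * s * b ^ 2) :
    ¬ ∃ b₁ b₂ : ℤ, a - 1 = r * b₁ ^ 2 ∧ a + 1 = 2 * q * s * b₂ ^ 2 :=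
  stmt3_general q r s hq hr hq8 hr8 h1 a
end

section
/- Let q ≡ 7 (mod 8) and r ≡ s ≡ 3 (mod 8) be distinct primes with (q/r) = (q/s) = -1 and (s/r) = 1. Write the fundamental unit of Q(√(2qrs)) as ε = a + b√(2qrs) with a, b positive integers (so a² - 1 = 2qrs·b²). Then exactly one of the following holds: (i) r(a+1) is a perfect square, (ii) 2q(a-1) is a perfect square, (iii) 2s(a+1) is a perfect square. -/
lemma legEq (p : ℕ) [Fact p.Prime] {x y : ℤ} (h : ((x : ZMod p)) = (y : ZMod p)) :
    legendreSym p x = legendreSym p y := by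
  simp only [legendreSym, h]

lemma legMulNat (p : ℕ) [Fact p.Prime] (x y : ℕ) :
    legendreSym p ((x * y : ℕ) : ℤ) = legendreSym p (x : ℤ) * legendreSym p (y : ℤ) := by
  push_cast
  rw [legendreSym.mul]

lemma dvd_peel {m x p : ℕ} (hp : p.Prime) (hnp : ¬ p ∣ m) (h : m ∣ x * p) : m ∣ x :=
  Nat.Coprime.dvd_of_dvd_mul_right
    (Nat.Coprime.symm ((Nat.Prime.coprime_iff_not_dvd hp).mpr hnp)) h

lemma dvd_one_prime {m p : ℕ} (hp : p.Prime) (hnp : ¬ p ∣ m) (h : m ∣ p) : m = 1 := by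
  rcases (Nat.Prime.eq_one_or_self_of_dvd hp m h) with h' | h'
  · exact h'
  · exact absurd (h' ▸ dvd_refl m) hnp

lemma legOne_of_dvd_prime (p : ℕ) [Fact p.Prime] {n z : ℕ} (hz : z.Prime)
    (h : n ∣ z) (lz : legendreSym p (z : ℤ) = 1) : legendreSym p (n : ℤ) = 1 := by
  rcases (Nat.Prime.eq_one_or_self_of_dvd hz n h) with h' | h'
  · rw [h']; norm_num [legendreSym.at_one]
  · rw [h']; exact lz

lemma legOne_of_dvd_mul2 (p : ℕ) [Fact p.Prime] {n y z : ℕ} (hy : y.Prime) (hz : z.Prime)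
    (h : n ∣ y * z) (ly : legendreSym p (y : ℤ) = 1) (lz : legendreSym p (z : ℤ) = 1) :
    legendreSym p (n : ℤ) = 1 := by
  by_cases hyd : y ∣ n
  · obtain ⟨n', hn'⟩ := hyd
    have h' : n' ∣ z := by
      have hyz : y * n' ∣ y * z := hn' ▸ h
      exact (Nat.mul_dvd_mul_iff_left hy.pos).mp hyz
    rw [hn', legMulNat, ly, one_mul]
    exact legOne_of_dvd_prime p hz h' lz
  · have h' : n ∣ z := by
      have : n ∣ z * y := (mul_comm y z) ▸ h
      exact dvd_peel hy hyd this
    exact legOne_of_dvd_prime p hz h' lz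

lemma legOne_of_dvd_mul3 (p : ℕ) [Fact p.Prime] {n x y z : ℕ}
    (hx : x.Prime) (hy : y.Prime) (hz : z.Prime)
    (h : n ∣ x * y * z)
    (lx : legendreSym p (x : ℤ) = 1) (ly : legendreSym p (y : ℤ) = 1)
    (lz : legendreSym p (z : ℤ) = 1) : legendreSym p (n : ℤ) = 1 := by
  by_cases hxd : x ∣ n
  · obtain ⟨n', hn'⟩ := hxd
    have h' : n' ∣ y * z := by
      have : x * n' ∣ x * (y * z) := by rw [← hn', ← mul_assoc]; exact h
      exact (Nat.mul_dvd_mul_iff_left hx.pos).mp this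
    rw [hn', legMulNat, lx, one_mul]
    exact legOne_of_dvd_mul2 p hy hz h' ly lz
  · have h' : n ∣ y * z := by
      have : n ∣ (y * z) * x := (show x * y * z = (y * z) * x by ring) ▸ h
      exact dvd_peel hx hxd this
    exact legOne_of_dvd_mul2 p hy hz h' ly lz

lemma elimA (p : ℕ) [Fact p.Prime] (u e : ℕ) (hp4 : p % 4 = 3)
    (h : ((u : ZMod p)) * (e : ZMod p)^2 = -1) (hleg : legendreSym p (u : ℤ) = 1) : False := by
  have hp2 : p ≠ 2 := by omega
  have h' : legendreSym p ((u : ℤ) * (e:ℤ)^2) = legendreSym p (-1) := by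
    apply legEq; push_cast; exact h
  rw [legendreSym.at_neg_one hp2, ZMod.χ₄_nat_three_mod_four hp4] at h'
  rw [legendreSym.mul, hleg, one_mul] at h'
  have h2 : legendreSym p ((e:ℤ)^2) = legendreSym p (e:ℤ) ^ 2 := by
    rw [sq, sq, legendreSym.mul]
  rw [h2] at h'
  nlinarith [sq_nonneg (legendreSym p (e:ℤ))]

lemma elimB (p : ℕ) [Fact p.Prime] (u f : ℕ)
    (h : ((u : ZMod p)) * (f : ZMod p)^2 = 1) (hleg : legendreSym p (u : ℤ) = -1) : False := by
  have h' : legendreSym p ((u : ℤ) * (f:ℤ)^2) = legendreSym p 1 := by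
    apply legEq; push_cast; simpa using h
  rw [legendreSym.at_one, legendreSym.mul, hleg] at h'
  have h2 : legendreSym p ((f:ℤ)^2) = legendreSym p (f:ℤ) ^ 2 := by
    rw [sq, sq, legendreSym.mul]
  rw [h2] at h'
  nlinarith [sq_nonneg (legendreSym p (f:ℤ))]

lemma leafElimA (p n₁ e t : ℕ) [Fact p.Prime] (hp4 : p % 4 = 3)
    (ht : t = n₁ * e ^ 2) (hpd : p ∣ t + 1) (hleg : legendreSym p (n₁ : ℤ) = 1) : False := by
  apply elimA p n₁ e hp4 _ hleg
  have h0 : ((t + 1 : ℕ) : ZMod p) = 0 := (ZMod.natCast_eq_zero_iff _ _).mpr hpd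
  rw [ht] at h0
  push_cast at h0
  linear_combination h0

lemma leafElimB (p n₂ f t : ℕ) [Fact p.Prime]
    (ht1 : t + 1 = n₂ * f ^ 2) (hpd : p ∣ t) (hleg : legendreSym p (n₂ : ℤ) = -1) : False := by
  apply elimB p n₂ f _ hleg
  have h0 : ((t : ℕ) : ZMod p) = 0 := (ZMod.natCast_eq_zero_iff _ _).mpr hpd
  have h1 : ((t + 1 : ℕ) : ZMod p) = ((n₂ * f ^ 2 : ℕ) : ZMod p) := by rw [ht1]
  push_cast at h1
  rw [h0] at h1
  linear_combination -h1

lemma side1 {p n₁ n₂ e f t : ℕ} (hp : p.Prime) (hpn : p ∣ n₁ * n₂)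
    (ht : t = n₁ * e ^ 2) (ht1 : t + 1 = n₂ * f ^ 2) (hpt : p ∣ t) :
    p ∣ n₁ ∧ ¬ p ∣ n₂ := by
  have h2 : ¬ p ∣ n₂ := by
    intro hd
    have hd1 : p ∣ t + 1 := ht1 ▸ Dvd.dvd.mul_right hd _
    have : p ∣ 1 := by
      have := Nat.dvd_sub hd1 hpt
      simpa using this
    exact absurd (Nat.dvd_one.mp this) (Nat.Prime.one_lt hp).ne'
  rcases (Nat.Prime.dvd_mul hp).mp hpn with h | h
  · exact ⟨h, h2⟩
  · exact absurd h h2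

lemma side2 {p n₁ n₂ e f t : ℕ} (hp : p.Prime) (hpn : p ∣ n₁ * n₂)
    (ht : t = n₁ * e ^ 2) (ht1 : t + 1 = n₂ * f ^ 2) (hpt : p ∣ t + 1) :
    p ∣ n₂ ∧ ¬ p ∣ n₁ := by
  have h2 : ¬ p ∣ n₁ := by
    intro hd
    have hd1 : p ∣ t := ht ▸ Dvd.dvd.mul_right hd _
    have : p ∣ 1 := by
      have := Nat.dvd_sub hpt hd1
      simpa using this
    have := Nat.dvd_one.mp this
    exact absurd this (Nat.Prime.one_lt hp).ne'
  rcases (Nat.Prime.dvd_mul hp).mp hpn with h | h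
  · exact absurd h h2
  · exact ⟨h, h2⟩

lemma coprime_sq_help {x y b : ℕ} (hco : Nat.Coprime x y) (h : x * y = b ^ 2) :
    ∃ e, x = e ^ 2 := by
  apply exists_eq_pow_of_mul_eq_pow (c := b) (k := 2) _ h
  rw [Nat.isUnit_iff]
  exact hco

lemma split_lemma (c d n b : ℕ) (hn : n ≠ 0) (hcd : Nat.Coprime c d)
    (h : c * d = n * b ^ 2) :
    ∃ n₁ n₂ e f : ℕ, n₁ * n₂ = n ∧ c = n₁ * e ^ 2 ∧ d = n₂ * f ^ 2 := by
  have hndvd : n ∣ c * d := ⟨b ^ 2, h⟩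
  have hmul : Nat.gcd c n * Nat.gcd d n = n := by
    apply Nat.dvd_antisymm
    · exact Nat.Coprime.mul_dvd_of_dvd_of_dvd
        (Nat.Coprime.coprime_dvd_left (Nat.gcd_dvd_left c n)
          (Nat.Coprime.coprime_dvd_right (Nat.gcd_dvd_left d n) hcd))
        (Nat.gcd_dvd_right c n) (Nat.gcd_dvd_right d n)
    · have e1 : Nat.gcd c n * Nat.gcd d n
          = Nat.gcd (Nat.gcd (c*d) (c*n)) (Nat.gcd (n*d) (n*n)) := by
        rw [← Nat.gcd_mul_right c (Nat.gcd d n) n, ← Nat.gcd_mul_left c d n,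
          ← Nat.gcd_mul_left n d n]
      rw [e1]
      exact Nat.dvd_gcd (Nat.dvd_gcd hndvd (Dvd.dvd.mul_left (dvd_refl n) c))
        (Nat.dvd_gcd (dvd_mul_right n d) (dvd_mul_right n n))
  set g1 := Nat.gcd c n with hg1
  set g2 := Nat.gcd d n with hg2
  obtain ⟨c₁, hc₁⟩ : g1 ∣ c := Nat.gcd_dvd_left c n
  obtain ⟨d₁, hd₁⟩ : g2 ∣ d := Nat.gcd_dvd_left d n
  have hb2 : c₁ * d₁ = b ^ 2 := by
    have h2 : n * (c₁ * d₁) = n * b ^ 2 :=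
      calc n * (c₁ * d₁) = (g1 * c₁) * (g2 * d₁) := by rw [← hmul]; ring
        _ = c * d := by rw [← hc₁, ← hd₁]
        _ = n * b ^ 2 := h
    exact Nat.eq_of_mul_eq_mul_left (Nat.pos_of_ne_zero hn) h2
  have hco : Nat.Coprime c₁ d₁ := by
    apply Nat.Coprime.coprime_dvd_left (Dvd.intro_left _ hc₁.symm)
    exact Nat.Coprime.coprime_dvd_right (Dvd.intro_left _ hd₁.symm) hcd
  obtain ⟨e, he⟩ := coprime_sq_help hco hb2
  obtain ⟨f, hf⟩ := coprime_sq_help hco.symm (by rw [mul_comm] at hb2; exact hb2)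
  exact ⟨g1, g2, e, f, hmul, by rw [← he]; exact hc₁, by rw [← hf]; exact hd₁⟩
lemma cancel_sq {u v k m : ℤ} (hk : k ≠ 0) (h : (u * v) ^ 2 = k ^ 2 * m) :
    IsSquare m := by
  have hdvd : k ∣ u * v := by
    rw [← Int.pow_dvd_pow_iff (two_ne_zero)]
    exact ⟨m, h⟩
  obtain ⟨w, hw⟩ := hdvd
  refine ⟨w, ?_⟩
  have h2 : k ^ 2 * (w * w) = k ^ 2 * m := by rw [← h, hw]; ring
  exact (mul_left_cancel₀ (pow_ne_zero 2 hk) h2).symm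

lemma no_sq_two_mod_four {m : ℕ} (hm : m % 4 = 2) (h : IsSquare ((m : ℕ) : ℤ)) : False := by
  obtain ⟨w, hw⟩ := h
  have h4 : ((w : ZMod 4)) * w = ((m : ℕ) : ZMod 4) := by
    have := congrArg (fun z : ℤ => (z : ZMod 4)) hw
    push_cast at this
    exact this.symm
  rw [show ((m : ℕ) : ZMod 4) = ((m % 4 : ℕ) : ZMod 4) from (ZMod.natCast_mod m 4).symm,
    hm] at h4
  have : ∀ x : ZMod 4, x * x ≠ ((2 : ℕ) : ZMod 4) := by decide
  exact this _ h4

lemma no_sq_prime {p : ℕ} (hp : p.Prime) (h : IsSquare ((p : ℕ) : ℤ)) : False :=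
  hp.prime.not_isSquare (Int.isSquare_natCast_iff.mp h)

lemma two_mul_mod_four {r s : ℕ} (hr : r % 4 = 3) (hs : s % 4 = 3) : (2 * r * s) % 4 = 2 := by
  obtain ⟨k, hk⟩ : ∃ k, r = 4 * k + 3 := ⟨r / 4, by omega⟩
  obtain ⟨l, hl⟩ : ∃ l, s = 4 * l + 3 := ⟨s / 4, by omega⟩
  subst hk hl
  have : 2 * (4 * k + 3) * (4 * l + 3) = 4 * (8 * k * l + 6 * k + 6 * l + 4) + 2 := by ring
  rw [this, Nat.mul_add_mod]

lemma excl13 {r s : ℕ} {a : ℤ} (hr4 : r % 4 = 3) (hs4 : s % 4 = 3) (ha : 0 < a)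
    (H1 : IsSquare ((r : ℤ) * (a + 1))) (H3 : IsSquare (2 * (s : ℤ) * (a + 1))) : False := by
  obtain ⟨u, hu⟩ := H1
  obtain ⟨v, hv⟩ := H3
  have key : (u * v) ^ 2 = (a + 1) ^ 2 * ((2 * r * s : ℕ) : ℤ) := by
    have : (u * v) ^ 2 = (u * u) * (v * v) := by ring
    rw [this, ← hu, ← hv]
    push_cast
    ring
  exact no_sq_two_mod_four (two_mul_mod_four hr4 hs4)
    (cancel_sq (by positivity) key)

lemma excl12 {q r s : ℕ} {a b : ℤ} (hs : s.Prime) (hq0 : 0 < q) (hr0 : 0 < r) (hb : b ≠ 0)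
    (hPell : a ^ 2 - 1 = 2 * q * r * s * b ^ 2)
    (H1 : IsSquare ((r : ℤ) * (a + 1))) (H2 : IsSquare (2 * (q : ℤ) * (a - 1))) : False := by
  obtain ⟨u, hu⟩ := H1
  obtain ⟨v, hv⟩ := H2
  have key : (u * v) ^ 2 = (2 * (q:ℤ) * r * b) ^ 2 * ((s : ℕ) : ℤ) := by
    have h0 : (u * v) ^ 2 = (u * u) * (v * v) := by ring
    rw [h0, ← hu, ← hv]
    linear_combination (2 * (q:ℤ) * r) * hPell
  have hk : (2 * (q:ℤ) * r * b) ≠ 0 := by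
    have : (0:ℤ) < q := by exact_mod_cast hq0
    have : (0:ℤ) < r := by exact_mod_cast hr0
    intro h; rcases mul_eq_zero.mp h with h' | h'
    · rcases mul_eq_zero.mp h' with h'' | h''
      · rcases mul_eq_zero.mp h'' with h3 | h3 <;> omega
      · omega
    · exact hb h'
  exact no_sq_prime hs (cancel_sq hk key)

lemma excl23 {q r s : ℕ} {a b : ℤ} (hr4 : r % 4 = 3) (hq0 : 0 < q) (hs0 : 0 < s) (hb : b ≠ 0)
    (hPell : a ^ 2 - 1 = 2 * q * r * s * b ^ 2)
    (H2 : IsSquare (2 * (q : ℤ) * (a - 1))) (H3 : IsSquare (2 * (s : ℤ) * (a + 1))) : False := by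
  obtain ⟨v, hv⟩ := H2
  obtain ⟨w, hw⟩ := H3
  have key : (v * w) ^ 2 = (2 * (q:ℤ) * s * b) ^ 2 * ((2 * r : ℕ) : ℤ) := by
    have h0 : (v * w) ^ 2 = (v * v) * (w * w) := by ring
    rw [h0, ← hv, ← hw]
    push_cast
    linear_combination (4 * (q:ℤ) * s) * hPell
  have hk : (2 * (q:ℤ) * s * b) ≠ 0 := by
    have : (0:ℤ) < q := by exact_mod_cast hq0
    have : (0:ℤ) < s := by exact_mod_cast hs0
    intro h; rcases mul_eq_zero.mp h with h' | h'
    · rcases mul_eq_zero.mp h' with h'' | h''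
      · rcases mul_eq_zero.mp h'' with h3 | h3 <;> omega
      · omega
    · exact hb h'
  have : (2 * r) % 4 = 2 := by omega
  exact no_sq_two_mod_four this (cancel_sq hk key)
/-- Let q ≡ 7 (mod 8) and r ≡ s ≡ 3 (mod 8) be distinct primes with
(q/r) = (q/s) = -1 and (s/r) = 1. Write the fundamental unit of Q(√(2qrs)) as
ε = a + b√(2qrs) with a, b positive integers (so a² - 1 = 2qrs·b²; fundamental means
a is minimal among positive solutions). Then exactly one of the following holds:
(i) r(a+1) is a perfect square, (ii) 2q(a-1) is a perfect square,
(iii) 2s(a+1) is a perfect square. -/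
theorem stmt8 (q r s : ℕ) (hq : q.Prime) (hr : r.Prime) (hs : s.Prime)
    (hqr : q ≠ r) (hqs : q ≠ s) (hrs : r ≠ s)
    (hq8 : q % 8 = 7) (hr8 : r % 8 = 3) (hs8 : s % 8 = 3)
    (h1 : @legendreSym r ⟨hr⟩ (q : ℤ) = -1) (h2 : @legendreSym s ⟨hs⟩ (q : ℤ) = -1)
    (h3 : @legendreSym r ⟨hr⟩ (s : ℤ) = 1)
    (a b : ℤ) (ha : 0 < a) (hb : 0 < b)
    (hPell : a ^ 2 - 1 = 2 * q * r * s * b ^ 2)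
    (hfund : ∀ a' b' : ℤ, 0 < a' → 0 < b' → a' ^ 2 - 1 = 2 * q * r * s * b' ^ 2 → a ≤ a') :
    (IsSquare (r * (a + 1)) ∧ ¬ IsSquare (2 * q * (a - 1)) ∧ ¬ IsSquare (2 * s * (a + 1))) ∨
    (¬ IsSquare (r * (a + 1)) ∧ IsSquare (2 * q * (a - 1)) ∧ ¬ IsSquare (2 * s * (a + 1))) ∨
    (¬ IsSquare (r * (a + 1)) ∧ ¬ IsSquare (2 * q * (a - 1)) ∧ IsSquare (2 * s * (a + 1))) := by
  haveI fq : Fact q.Prime := ⟨hq⟩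
  haveI fr : Fact r.Prime := ⟨hr⟩
  haveI fs : Fact s.Prime := ⟨hs⟩
  have h1' : legendreSym r (q : ℤ) = -1 := h1
  have h2' : legendreSym s (q : ℤ) = -1 := h2
  have h3' : legendreSym r (s : ℤ) = 1 := h3
  have hq2 : q ≠ 2 := by omega
  have hr2 : r ≠ 2 := by omega
  have hs2 : s ≠ 2 := by omega
  have hq4 : q % 4 = 3 := by omega
  have hr4 : r % 4 = 3 := by omega
  have hs4 : s % 4 = 3 := by omega
  -- Legendre symbol values
  have Lq2 : legendreSym q ((2:ℕ) : ℤ) = 1 := by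
    rw [show ((2:ℕ):ℤ) = 2 by norm_num, legendreSym.at_two hq2, ZMod.χ₈_nat_eq_if_mod_eight]
    simp [show q % 2 = 1 by omega, hq8]
  have Lr2 : legendreSym r ((2:ℕ) : ℤ) = -1 := by
    rw [show ((2:ℕ):ℤ) = 2 by norm_num, legendreSym.at_two hr2, ZMod.χ₈_nat_eq_if_mod_eight]
    simp [show r % 2 = 1 by omega, hr8]
  have Ls2 : legendreSym s ((2:ℕ) : ℤ) = -1 := by
    rw [show ((2:ℕ):ℤ) = 2 by norm_num, legendreSym.at_two hs2, ZMod.χ₈_nat_eq_if_mod_eight]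
    simp [show s % 2 = 1 by omega, hs8]
  have Lqr : legendreSym q ((r:ℕ) : ℤ) = 1 := by
    rw [legendreSym.quadratic_reciprocity_three_mod_four hr4 hq4, h1']; norm_num
  have Lqs : legendreSym q ((s:ℕ) : ℤ) = 1 := by
    rw [legendreSym.quadratic_reciprocity_three_mod_four hs4 hq4, h2']; norm_num
  have Lsr : legendreSym s ((r:ℕ) : ℤ) = -1 := by
    rw [legendreSym.quadratic_reciprocity_three_mod_four hr4 hs4, h3']
  -- numeric setup
  obtain ⟨A, hA⟩ : ∃ A : ℕ, a = (A:ℤ) := ⟨a.toNat, (Int.toNat_of_nonneg ha.le).symm⟩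
  obtain ⟨B, hB⟩ : ∃ B : ℕ, b = (B:ℤ) := ⟨b.toNat, (Int.toNat_of_nonneg hb.le).symm⟩
  have hNat : A ^ 2 = 2*q*r*s*B^2 + 1 := by
    have hZ : ((A:ℤ))^2 = 2*q*r*s*(B:ℤ)^2 + 1 := by
      rw [← hA, ← hB]; linarith [hPell]
    exact_mod_cast hZ
  have hB0 : B ≠ 0 := by
    intro h0
    rw [h0] at hB
    rw [hB] at hb
    norm_num at hb
  obtain ⟨t, hAt⟩ : ∃ t, A = 2*t+1 := by
    rcases Nat.even_or_odd A with hpar | hpar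
    · exfalso
      obtain ⟨k, hk⟩ := hpar
      have hNk : (k+k)^2 = 2*q*r*s*B^2+1 := hk ▸ hNat
      have h2 : 2*(2*(k*k)) = 2*(q*r*s*B^2) + 1 := by linear_combination hNk
      generalize k*k = K at h2
      generalize q*r*s*B^2 = M at h2
      omega
    · obtain ⟨t, ht⟩ := hpar
      exact ⟨t, by omega⟩
  have hNZ : (2*(t:ℤ)+1)^2 = 2*q*r*s*(B:ℤ)^2+1 := by
    have := hNat; rw [hAt] at this; exact_mod_cast this
  have h4t : (4:ℤ)*((t:ℤ)*((t:ℤ)+1)) = 2*((q:ℤ)*(r:ℤ)*(s:ℤ)*(B:ℤ)^2) := by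
    linear_combination hNZ
  have h4tN : 4*(t*(t+1)) = 2*(q*r*s*B^2) := by exact_mod_cast h4t
  have hqrsmod : (q*r*s) % 2 = 1 :=
    Nat.odd_iff.mp (Odd.mul (Odd.mul (Nat.odd_iff.mpr (by omega)) (Nat.odd_iff.mpr (by omega)))
      (Nat.odd_iff.mpr (by omega)))
  obtain ⟨B₀, hB₀⟩ : 2 ∣ B := by
    have hdvd : 2 ∣ (q*r*s)*B^2 := ⟨t*(t+1), by omega⟩
    rcases (Nat.Prime.dvd_mul Nat.prime_two).mp hdvd with h | h
    · exfalso; omega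
    · exact Nat.Prime.dvd_of_dvd_pow (p := 2) (n := 2) Nat.prime_two h
  have hkey : t*(t+1) = 2*q*r*s*B₀^2 := by
    have h4 : 4*(t*(t+1)) = 4*(2*q*r*s*B₀^2) := by
      rw [h4tN, hB₀]; ring
    exact Nat.eq_of_mul_eq_mul_left (by norm_num) h4
  have ht1 : 1 ≤ t := by
    rcases Nat.eq_zero_or_pos t with rfl | h
    · exfalso
      simp only [Nat.zero_mul, zero_mul] at hkey
      have := hkey.symm
      rcases Nat.mul_eq_zero.mp this with h' | h'
      · rcases Nat.mul_eq_zero.mp h' with h'' | h''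
        · rcases Nat.mul_eq_zero.mp h'' with h3 | h3
          · rcases Nat.mul_eq_zero.mp h3 with h4 | h4
            · omega
            · exact absurd h4 hq.pos.ne'
          · exact absurd h3 hr.pos.ne'
        · exact absurd h'' hs.pos.ne'
      · have : B₀ = 0 := by
          have := Nat.pow_eq_zero.mp h'
          exact this.1
        omega
    · exact h
  have hco : Nat.Coprime t (t+1) := by
    have hd1 := Nat.gcd_dvd_left t (t+1)
    have hd2 := Nat.gcd_dvd_right t (t+1)
    have hd3 : Nat.gcd t (t+1) ∣ 1 := by simpa using Nat.dvd_sub hd2 hd1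
    exact Nat.dvd_one.mp hd3
  obtain ⟨n₁, n₂, e, f, hn12, htn, ht1n⟩ :=
    split_lemma t (t+1) (2*q*r*s) B₀
      (by have := hq.pos; have := hr.pos; have := hs.pos; positivity) hco hkey
  have hn₁dvd : n₁ ∣ 2*q*r*s := by rw [← hn12]; exact dvd_mul_right n₁ n₂
  have hn₂dvd : n₂ ∣ 2*q*r*s := by rw [← hn12]; exact dvd_mul_left n₂ n₁
  have hdvq : q ∣ n₁ * n₂ := by rw [hn12]; exact ⟨2*r*s, by ring⟩
  have hdvr : r ∣ n₁ * n₂ := by rw [hn12]; exact ⟨2*q*s, by ring⟩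
  have hdvs : s ∣ n₁ * n₂ := by rw [hn12]; exact ⟨2*q*r, by ring⟩
  have hdv2 : 2 ∣ n₁ * n₂ := by rw [hn12]; exact ⟨q*r*s, by ring⟩
  have hqd : q ∣ t * (t+1) := by rw [hkey]; exact ⟨2*r*s*B₀^2, by ring⟩
  have hrd : r ∣ t * (t+1) := by rw [hkey]; exact ⟨2*q*s*B₀^2, by ring⟩
  have hsd : s ∣ t * (t+1) := by rw [hkey]; exact ⟨2*q*r*B₀^2, by ring⟩
  have haZ : a = 2*(t:ℤ)+1 := by rw [hA]; exact_mod_cast hAt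
  have htZ : ((t:ℕ):ℤ) = ((n₁:ℕ):ℤ)*((e:ℕ):ℤ)^2 := by exact_mod_cast htn
  have ht1Z : ((t:ℕ):ℤ)+1 = ((n₂:ℕ):ℤ)*((f:ℕ):ℤ)^2 := by exact_mod_cast ht1n
  have co2q : Nat.Coprime 2 q := (Nat.coprime_primes Nat.prime_two hq).mpr (Ne.symm hq2)
  have co2r : Nat.Coprime 2 r := (Nat.coprime_primes Nat.prime_two hr).mpr (Ne.symm hr2)
  have co2s : Nat.Coprime 2 s := (Nat.coprime_primes Nat.prime_two hs).mpr (Ne.symm hs2)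
  have coqr : Nat.Coprime q r := (Nat.coprime_primes hq hr).mpr hqr
  have coqs : Nat.Coprime q s := (Nat.coprime_primes hq hs).mpr hqs
  have cors : Nat.Coprime r s := (Nat.coprime_primes hr hs).mpr hrs
  rcases (hq.dvd_mul.mp hqd) with hqt | hqt1
  case _ =>
    -- q divides t
    obtain ⟨hqn1, hqn2⟩ := side1 hq hdvq htn ht1n hqt
    rcases (hr.dvd_mul.mp hrd) with hrt | hrt1
    case _ =>
      obtain ⟨hrn1, hrn2⟩ := side1 hr hdvr htn ht1n hrt
      rcases (hs.dvd_mul.mp hsd) with hst | hst1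
      case _ =>
        obtain ⟨hsn1, hsn2⟩ := side1 hs hdvs htn ht1n hst
        rcases (show 2 ∣ t ∨ 2 ∣ t + 1 by omega) with h2t | h2t1
        case _ =>
          -- T = ∅ : descent, contradiction with minimality
          obtain ⟨h2n1, h2n2⟩ := side1 Nat.prime_two hdv2 htn ht1n h2t
          exfalso
          have d1 : n₂ ∣ 2*q*r := dvd_peel hs hsn2 hn₂dvd
          have d2 : n₂ ∣ 2*q := dvd_peel hr hrn2 d1
          have d3 : n₂ ∣ 2 := dvd_peel hq hqn2 d2
          have hpin : n₂ = 1 := dvd_one_prime Nat.prime_two h2n2 d3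
          have hpin1 : n₁ = 2*q*r*s := by
            have := hn12
            rw [hpin, mul_one] at this
            exact this
          rw [hpin, one_mul] at ht1n
          rw [hpin1] at htn
          have hf1 : 1 ≤ f := by
            rcases Nat.eq_zero_or_pos f with rfl | h
            · exfalso; simp at ht1n
            · exact h
          have he1 : 1 ≤ e := by
            rcases Nat.eq_zero_or_pos e with rfl | h
            · exfalso; simp at htn; omega
            · exact h
          have heq : ((f:ℕ):ℤ)^2 - 1 = 2*q*r*s*((e:ℕ):ℤ)^2 := by
            have hn' : f^2 = 2*q*r*s*e^2 + 1 := by omega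
            have := congrArg (fun n : ℕ => (n:ℤ)) hn'
            push_cast at this
            linarith
          have hle := hfund (f:ℤ) (e:ℤ) (by exact_mod_cast hf1) (by exact_mod_cast he1) heq
          rw [hA] at hle
          have hAf : A ≤ f := by exact_mod_cast hle
          have hff : f ≤ f^2 := Nat.le_self_pow two_ne_zero f
          omega
        case _ =>
          -- T = {2} : elimination mod r  (n₂ = 2)
          obtain ⟨h2n2, h2n1⟩ := side2 Nat.prime_two hdv2 htn ht1n h2t1
          exfalso
          have d1 : n₂ ∣ 2*q*r := dvd_peel hs hsn2 hn₂dvd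
          have d2 : n₂ ∣ 2*q := dvd_peel hr hrn2 d1
          have d3 : n₂ ∣ 2 := dvd_peel hq hqn2 d2
          have hpin : n₂ = 2 := Nat.dvd_antisymm d3 h2n2
          exact leafElimB r n₂ f t ht1n hrt (by rw [hpin]; exact Lr2)
      case _ =>
        obtain ⟨hsn2, hsn1⟩ := side2 hs hdvs htn ht1n hst1
        rcases (show 2 ∣ t ∨ 2 ∣ t + 1 by omega) with h2t | h2t1
        case _ =>
          -- T = {s} : survivor (iii)
          obtain ⟨h2n1, h2n2⟩ := side1 Nat.prime_two hdv2 htn ht1n h2t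
          have e1 : n₂ ∣ s*2*q*r := (show 2*q*r*s = s*2*q*r by ring) ▸ hn₂dvd
          have e2 : n₂ ∣ s*2*q := dvd_peel hr hrn2 e1
          have e3 : n₂ ∣ s*2 := dvd_peel hq hqn2 e2
          have e4 : n₂ ∣ s := dvd_peel Nat.prime_two h2n2 e3
          have hpin : n₂ = s := Nat.dvd_antisymm e4 hsn2
          rw [hpin] at ht1Z
          have H3 : IsSquare (2 * (s:ℤ) * (a + 1)) := by
            refine ⟨2*(s:ℤ)*(f:ℤ), ?_⟩
            linear_combination 2*(s:ℤ)*haZ + 4*(s:ℤ)*ht1Z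
          refine Or.inr (Or.inr ⟨?_, ?_, H3⟩)
          · intro H1
            exact excl13 hr4 hs4 ha H1 H3
          · intro H2
            exact excl23 hr4 hq.pos hs.pos hb.ne' hPell H2 H3
        case _ =>
          -- T = {2, s} : elimination mod s  (n₁ = q*r)
          obtain ⟨h2n2, h2n1⟩ := side2 Nat.prime_two hdv2 htn ht1n h2t1
          exfalso
          have e1 : n₁ ∣ q*r*s*2 := (show 2*q*r*s = q*r*s*2 by ring) ▸ hn₁dvd
          have e2 : n₁ ∣ q*r*s := dvd_peel Nat.prime_two h2n1 e1
          have e3 : n₁ ∣ q*r := dvd_peel hs hsn1 e2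
          have elow : q*r ∣ n₁ := Nat.Coprime.mul_dvd_of_dvd_of_dvd coqr hqn1 hrn1
          have hpin : n₁ = q*r := Nat.dvd_antisymm e3 elow
          have L : legendreSym s ((q*r : ℕ):ℤ) = 1 := by
            rw [legMulNat, h2', Lsr]; norm_num
          exact leafElimA s n₁ e t hs4 htn hst1 (by rw [hpin]; exact L)
    case _ =>
      obtain ⟨hrn2, hrn1⟩ := side2 hr hdvr htn ht1n hrt1
      rcases (hs.dvd_mul.mp hsd) with hst | hst1
      case _ =>
        obtain ⟨hsn1, hsn2⟩ := side1 hs hdvs htn ht1n hst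
        rcases (show 2 ∣ t ∨ 2 ∣ t + 1 by omega) with h2t | h2t1
        case _ =>
          -- T = {r} : elimination mod r (n₁ = 2*q*s)
          obtain ⟨h2n1, h2n2⟩ := side1 Nat.prime_two hdv2 htn ht1n h2t
          exfalso
          have e1 : n₁ ∣ 2*q*s*r := (show 2*q*r*s = 2*q*s*r by ring) ▸ hn₁dvd
          have e2 : n₁ ∣ 2*q*s := dvd_peel hr hrn1 e1
          have elow : 2*q*s ∣ n₁ :=
            Nat.Coprime.mul_dvd_of_dvd_of_dvd (Nat.Coprime.mul co2s coqs)
              (Nat.Coprime.mul_dvd_of_dvd_of_dvd co2q h2n1 hqn1) hsn1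
          have hpin : n₁ = 2*q*s := Nat.dvd_antisymm e2 elow
          have L : legendreSym r ((2*q*s : ℕ):ℤ) = 1 := by
            rw [legMulNat, legMulNat, Lr2, h1', h3']; norm_num
          exact leafElimA r n₁ e t hr4 htn hrt1 (by rw [hpin]; exact L)
        case _ =>
          -- T = {2, r} : survivor (i)
          obtain ⟨h2n2, h2n1⟩ := side2 Nat.prime_two hdv2 htn ht1n h2t1
          have e1 : n₂ ∣ 2*r*q*s := (show 2*q*r*s = 2*r*q*s by ring) ▸ hn₂dvd
          have e2 : n₂ ∣ 2*r*q := dvd_peel hs hsn2 e1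
          have e3 : n₂ ∣ 2*r := dvd_peel hq hqn2 e2
          have elow : 2*r ∣ n₂ := Nat.Coprime.mul_dvd_of_dvd_of_dvd co2r h2n2 hrn2
          have hpin : n₂ = 2*r := Nat.dvd_antisymm e3 elow
          rw [hpin] at ht1Z
          push_cast at ht1Z
          have H1 : IsSquare ((r:ℤ) * (a + 1)) := by
            refine ⟨2*(r:ℤ)*(f:ℤ), ?_⟩
            linear_combination (r:ℤ)*haZ + 2*(r:ℤ)*ht1Z
          refine Or.inl ⟨H1, ?_, ?_⟩
          · intro H2
            exact excl12 hs hq.pos hr.pos hb.ne' hPell H1 H2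
          · intro H3
            exact excl13 hr4 hs4 ha H1 H3
      case _ =>
        obtain ⟨hsn2, hsn1⟩ := side2 hs hdvs htn ht1n hst1
        rcases (show 2 ∣ t ∨ 2 ∣ t + 1 by omega) with h2t | h2t1
        case _ =>
          -- T = {r, s} : elimination mod r (n₁ = 2*q)
          obtain ⟨h2n1, h2n2⟩ := side1 Nat.prime_two hdv2 htn ht1n h2t
          exfalso
          have e1 : n₁ ∣ 2*q*r := dvd_peel hs hsn1 hn₁dvd
          have e2 : n₁ ∣ 2*q := dvd_peel hr hrn1 e1
          have hpin : n₁ = 2*q := Nat.dvd_antisymm e2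
            (Nat.Coprime.mul_dvd_of_dvd_of_dvd co2q h2n1 hqn1)
          have L : legendreSym r ((2*q : ℕ):ℤ) = 1 := by
            rw [legMulNat, Lr2, h1']; norm_num
          exact leafElimA r n₁ e t hr4 htn hrt1 (by rw [hpin]; exact L)
        case _ =>
          -- T = {2, r, s} : survivor (ii)
          obtain ⟨h2n2, h2n1⟩ := side2 Nat.prime_two hdv2 htn ht1n h2t1
          have e1 : n₁ ∣ q*2*r := dvd_peel hs hsn1
            ((show 2*q*r*s = q*2*r*s by ring) ▸ hn₁dvd)
          have e2 : n₁ ∣ q*2 := dvd_peel hr hrn1 e1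
          have e3 : n₁ ∣ q := dvd_peel Nat.prime_two h2n1 e2
          have hpin : n₁ = q := Nat.dvd_antisymm e3 hqn1
          rw [hpin] at htZ
          have H2 : IsSquare (2 * (q:ℤ) * (a - 1)) := by
            refine ⟨2*(q:ℤ)*(e:ℤ), ?_⟩
            linear_combination 2*(q:ℤ)*haZ + 4*(q:ℤ)*htZ
          refine Or.inr (Or.inl ⟨?_, H2, ?_⟩)
          · intro H1
            exact excl12 hs hq.pos hr.pos hb.ne' hPell H1 H2
          · intro H3
            exact excl23 hr4 hq.pos hs.pos hb.ne' hPell H2 H3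
  case _ =>
    -- q divides t+1 : elimination mod q
    obtain ⟨hqn2, hqn1⟩ := side2 hq hdvq htn ht1n hqt1
    exfalso
    have e1 : n₁ ∣ 2*r*s*q := (show 2*q*r*s = 2*r*s*q by ring) ▸ hn₁dvd
    have e2 : n₁ ∣ 2*r*s := dvd_peel hq hqn1 e1
    have L : legendreSym q ((n₁ : ℕ):ℤ) = 1 :=
      legOne_of_dvd_mul3 q Nat.prime_two hr hs e2 Lq2 Lqr Lqs
    exact leafElimA q n₁ e t hq4 htn hqt1 L
end
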